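/- arXiv:math/0701640 — 2 statements merged into one kernel-verified Lean document; each statement's English description precedes it below -/
import Mathlib

section
/- Let Ŷ ⊆ *ℝ be the internal set determined by a sequence (Y_n) of subsets of ℝ. Then the standard part st(Ŷ) = {a ∈ ℝ : y ≈ a for some y ∈ Ŷ} is a closed subset of ℝ. -/
open Filter Germ

/-- The internal subset of the hyperreals `*ℝ = ℝ^ℕ/𝒰` determined by a sequence
`Y : ℕ → Set ℝ` of subsets of `ℝ`. -/
def internalSet (Y : ℕ → Set ℝ) : Set Hyperreal :=
  {x : Hyperreal | ∃ f : ℕ → ℝ, x = Hyperreal.ofSeq f ∧ ∀ᶠ n in (hyperfilter ℕ : Filter ℕ), f n ∈ Y n}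

/-- The standard part of a subset `S ⊆ *ℝ`: all reals infinitely close to some
element of `S`. -/
def stSet (S : Set Hyperreal) : Set ℝ :=
  {a : ℝ | ∃ y ∈ S, Hyperreal.Infinitesimal (y - (a : Hyperreal))}

lemma infinitesimal_sub_iff (f : ℕ → ℝ) (a : ℝ) :
    Hyperreal.Infinitesimal (Hyperreal.ofSeq f - (a : Hyperreal)) ↔
      ∀ ε : ℝ, 0 < ε → ∀ᶠ n in (hyperfilter ℕ : Filter ℕ), |f n - a| < ε := by
  have h1 : Hyperreal.ofSeq f - (a : Hyperreal) = Hyperreal.ofSeq (fun n => f n - a) := rfl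
  rw [h1, Hyperreal.Infinitesimal, Hyperreal.isSt_ofSeq_iff_tendsto, Metric.tendsto_nhds]
  simp [Real.dist_eq]

lemma mem_stSet_iff (Y : ℕ → Set ℝ) (a : ℝ) :
    a ∈ stSet (internalSet Y) ↔
      ∀ ε : ℝ, 0 < ε → ∀ᶠ n in (hyperfilter ℕ : Filter ℕ), ∃ y ∈ Y n, |y - a| < ε := by
  constructor
  · rintro ⟨x, ⟨f, rfl, hf⟩, hinf⟩ ε hε
    filter_upwards [hf, (infinitesimal_sub_iff f a).1 hinf ε hε] with n h1 h2
    exact ⟨f n, h1, h2⟩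
  · intro h
    -- B k : the set of n where Y n meets each ball of radius 1/(j+1), j ≤ k
    set B : ℕ → Set ℕ := fun k => {n | ∀ j ≤ k, ∃ y ∈ Y n, |y - a| < 1 / (j + 1)} with hB
    have hBmem : ∀ k, ∀ᶠ n in (hyperfilter ℕ : Filter ℕ), n ∈ B k := by
      intro k
      induction k with
      | zero =>
        filter_upwards [h 1 one_pos] with n hn j hj
        interval_cases j
        simpa using hn
      | succ k ih =>
        have hpos : (0 : ℝ) < 1 / (k + 1 + 1) := by positivity
        filter_upwards [ih, h (1 / (k + 1 + 1)) hpos] with n hn hn' j hj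
        rcases Nat.lt_or_ge j (k + 1) with hj' | hj'
        · exact hn j (Nat.lt_succ_iff.1 hj')
        · have : j = k + 1 := le_antisymm hj hj'
          subst this
          simpa using hn'
    -- the diagonal index
    classical
    set d : ℕ → ℕ := fun n => Nat.findGreatest (fun k => n ∈ B k) n with hd
    set f : ℕ → ℝ := fun n =>
      if hx : ∃ y ∈ Y n, |y - a| < 1 / (d n + 1) then hx.choose else 0 with hfdef
    have hBd : ∀ n, n ∈ B 0 → n ∈ B (d n) := fun n hn =>
      Nat.findGreatest_spec (P := fun k => n ∈ B k) (Nat.zero_le n) hn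
    have hfY : ∀ n, n ∈ B 0 → f n ∈ Y n ∧ |f n - a| < 1 / (d n + 1) := by
      intro n hn
      have hx : ∃ y ∈ Y n, |y - a| < 1 / (d n + 1) := (hBd n hn) (d n) le_rfl
      simp only [hfdef, dif_pos hx]
      exact ⟨hx.choose_spec.1, hx.choose_spec.2⟩
    refine ⟨Hyperreal.ofSeq f, ⟨f, rfl, ?_⟩, ?_⟩
    · filter_upwards [hBmem 0] with n hn using (hfY n hn).1
    · rw [infinitesimal_sub_iff]
      intro ε hε
      obtain ⟨k, hk⟩ := exists_nat_one_div_lt hε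
      have hge : ∀ᶠ n in (hyperfilter ℕ : Filter ℕ), k ≤ n :=
        (Filter.eventually_ge_atTop k).filter_mono Nat.hyperfilter_le_atTop
      filter_upwards [hBmem k, hBmem 0, hge] with n hnk hn0 hkn
      have hdk : k ≤ d n := Nat.le_findGreatest (P := fun k => n ∈ B k) hkn hnk
      have h2 := (hfY n hn0).2
      calc |f n - a| < 1 / (d n + 1) := h2
        _ ≤ 1 / (k + 1) := by
            apply one_div_le_one_div_of_le (by positivity)
            exact_mod_cast Nat.succ_le_succ hdk
        _ < ε := hk
    
/-- The standard part of an internal subset of `*ℝ` is closed. -/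
theorem isClosed_stSet_internalSet (Y : ℕ → Set ℝ) :
    IsClosed (stSet (internalSet Y)) := by
  rw [← closure_eq_iff_isClosed]
  refine subset_antisymm (fun a ha => ?_) subset_closure
  rw [mem_stSet_iff]
  intro ε hε
  obtain ⟨b, hb, hab⟩ := Metric.mem_closure_iff.1 ha (ε / 2) (by positivity)
  filter_upwards [(mem_stSet_iff Y b).1 hb (ε / 2) (by positivity)] with n ⟨y, hy, hyb⟩
  refine ⟨y, hy, ?_⟩
  have : |y - a| ≤ |y - b| + |b - a| := by
    have := abs_sub_abs_le_abs_sub (y - a) 0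
    calc |y - a| = |(y - b) + (b - a)| := by ring_nf
      _ ≤ |y - b| + |b - a| := abs_add_le _ _
  rw [Real.dist_eq, abs_sub_comm] at hab
  linarith
end

section
/- Let Ŷ ⊆ *ℝ be the internal set determined by a sequence (Y_n) of subsets of ℝ, and suppose every element of Ŷ is finite (nearstandard), i.e. for each y ∈ Ŷ there is a real r with |y| < r. Then the standard part st(Ŷ) = {a ∈ ℝ : y ≈ a for some y ∈ Ŷ} is a compact subset of ℝ. -/
open Filter Germ

lemma diagonal_lemma (Y : ℕ → Set ℝ) (P : ℕ → ℝ → Prop)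
    (hmono : ∀ k j x, k ≤ j → P j x → P k x)
    (h : ∀ k : ℕ, ∃ f : ℕ → ℝ, ∀ᶠ n in (hyperfilter ℕ : Filter ℕ), f n ∈ Y n ∧ P k (f n)) :
    ∃ g : ℕ → ℝ, (∀ᶠ n in (hyperfilter ℕ : Filter ℕ), g n ∈ Y n) ∧
      ∀ k, ∀ᶠ n in (hyperfilter ℕ : Filter ℕ), P k (g n) := by
  classical
  choose f hf using h
  set D : ℕ → Set ℕ := fun k => {n | f k n ∈ Y n ∧ P k (f k n)} with hD
  have hDmem : ∀ k, D k ∈ (hyperfilter ℕ : Filter ℕ) := fun k => hf k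
  set D' : ℕ → Set ℕ := fun k => {n | k ≤ n ∧ ∀ j ≤ k, n ∈ D j} with hD'
  have hD'mem : ∀ k, D' k ∈ (hyperfilter ℕ : Filter ℕ) := by
    intro k
    have h1 : {n : ℕ | k ≤ n} ∈ (hyperfilter ℕ : Filter ℕ) := by
      apply hyperfilter_le_cofinite
      simpa using Set.Finite.subset (Set.finite_Iio k) (fun n hn => by
        simpa using lt_of_not_ge (by simpa using hn))
    have h2 : {n : ℕ | ∀ j ≤ k, n ∈ D j} ∈ (hyperfilter ℕ : Filter ℕ) := by
      have := (eventually_all_finite (Set.finite_Iic k)).2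
        (fun j _ => hDmem j)
      exact this
    exact inter_mem h1 h2
  set m : ℕ → ℕ := fun n => Nat.findGreatest (fun k => n ∈ D' k) n with hm
  set g : ℕ → ℝ := fun n => f (m n) n with hg
  have key : ∀ k n, n ∈ D' k → g n ∈ Y n ∧ P k (g n) := by
    intro k n hn
    have hkn : k ≤ n := hn.1
    have hle : k ≤ m n := Nat.le_findGreatest (P := fun j => n ∈ D' j) hkn hn
    have hspec : n ∈ D' (m n) := Nat.findGreatest_spec (P := fun j => n ∈ D' j) hkn hn
    have hDm : n ∈ D (m n) := hspec.2 (m n) le_rfl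
    exact ⟨hDm.1, hmono k (m n) _ hle hDm.2⟩
  refine ⟨g, ?_, fun k => ?_⟩
  · exact Filter.mem_of_superset (hD'mem 0) (fun n hn => (key 0 n hn).1)
  · exact Filter.mem_of_superset (hD'mem k) (fun n hn => (key k n hn).2)

lemma abs_ofSeq (f : ℕ → ℝ) :
    |Hyperreal.ofSeq f| = Hyperreal.ofSeq (fun n => |f n|) := by
  show |((f : Germ (hyperfilter ℕ : Filter ℕ) ℝ))| = _
  rw [Germ.abs_def, Germ.map_coe]
  rfl

lemma abs_ofSeq_lt_coe (f : ℕ → ℝ) (c : ℝ) :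
    |Hyperreal.ofSeq f| < (c : Hyperreal) ↔
      ∀ᶠ n in (hyperfilter ℕ : Filter ℕ), |f n| < c := by
  rw [abs_ofSeq]
  exact Hyperreal.ofSeq_lt_ofSeq

lemma coe_lt_abs_ofSeq (f : ℕ → ℝ) (c : ℝ) :
    (c : Hyperreal) < |Hyperreal.ofSeq f| ↔
      ∀ᶠ n in (hyperfilter ℕ : Filter ℕ), c < |f n| := by
  rw [abs_ofSeq]
  exact Hyperreal.ofSeq_lt_ofSeq

lemma ofSeq_sub_coe (f : ℕ → ℝ) (a : ℝ) :
    Hyperreal.ofSeq f - (a : Hyperreal) = Hyperreal.ofSeq (fun n => f n - a) := rfl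
lemma abs_lt_of_infinitesimal {x : Hyperreal} (h : x.Infinitesimal) {r : ℝ} (hr : 0 < r) :
    |x| < (r : Hyperreal) := by
  have := Hyperreal.infinitesimal_def.1 h r hr
  exact abs_lt.2 ⟨by simpa using this.1, this.2⟩


/-- If every element of an internal subset of `*ℝ` is finite (nearstandard),
then its standard part is compact. -/
theorem isCompact_stSet_internalSet (Y : ℕ → Set ℝ)
    (hfin : ∀ y ∈ internalSet Y, ∃ r : ℝ, |y| < (r : Hyperreal)) :
    IsCompact (stSet (internalSet Y)) := by
  rw [Metric.isCompact_iff_isClosed_bounded]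
  constructor
  · -- closed
    refine isClosed_of_closure_subset fun a ha => ?_
    have hstep : ∀ k : ℕ, ∃ f : ℕ → ℝ, ∀ᶠ n in (hyperfilter ℕ : Filter ℕ),
        f n ∈ Y n ∧ |f n - a| < 2 / (k + 1) := by
      intro k
      have hk : (0:ℝ) < 1/(k+1) := by positivity
      obtain ⟨b, hb, hab⟩ := Metric.mem_closure_iff.1 ha (1/(k+1)) hk
      obtain ⟨y, ⟨f, rfl, hfY⟩, hinf⟩ := hb
      have h1 : |Hyperreal.ofSeq f - (b : Hyperreal)| < ((1/(k+1) : ℝ) : Hyperreal) :=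
        abs_lt_of_infinitesimal hinf hk
      have h2 : |(b : Hyperreal) - (a : Hyperreal)| < ((1/(k+1) : ℝ) : Hyperreal) := by
        have : |b - a| < 1/(k+1) := by
          rw [abs_sub_comm]; simpa [Real.dist_eq] using hab
        calc |(b : Hyperreal) - (a : Hyperreal)| = ((|b - a| : ℝ) : Hyperreal) := by
              push_cast; rfl
          _ < _ := by exact_mod_cast this
      have h3 : |Hyperreal.ofSeq f - (a : Hyperreal)| < ((2/(k+1) : ℝ) : Hyperreal) := calc
        |Hyperreal.ofSeq f - (a : Hyperreal)| ≤
            |Hyperreal.ofSeq f - (b : Hyperreal)| + |(b : Hyperreal) - (a : Hyperreal)| :=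
          abs_sub_le _ _ _
        _ < ((1/(k+1) : ℝ) : Hyperreal) + ((1/(k+1) : ℝ) : Hyperreal) := add_lt_add h1 h2
        _ = ((2/(k+1) : ℝ) : Hyperreal) := by push_cast; ring
      rw [ofSeq_sub_coe, abs_ofSeq_lt_coe] at h3
      exact ⟨f, hfY.and h3⟩
    obtain ⟨g, hg1, hg2⟩ := diagonal_lemma Y (fun k x => |x - a| < 2/(k+1))
      (fun k j x hkj hx => lt_of_lt_of_le hx (by
        apply div_le_div_of_nonneg_left (by norm_num) (by positivity)
        exact_mod_cast Nat.succ_le_succ hkj)) hstep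
    refine ⟨Hyperreal.ofSeq g, ⟨g, rfl, hg1⟩, ?_⟩
    rw [Hyperreal.infinitesimal_def]
    intro r hr
    obtain ⟨k, hk⟩ := exists_nat_gt (2/r)
    have hkr : 2/(k+1 : ℝ) < r := by
      rw [div_lt_iff₀ (by positivity)]
      rw [div_lt_iff₀ hr] at hk
      nlinarith
    have h4 : |Hyperreal.ofSeq g - (a : Hyperreal)| < ((2/(k+1) : ℝ) : Hyperreal) := by
      rw [ofSeq_sub_coe, abs_ofSeq_lt_coe]
      exact hg2 k
    have h5 : |Hyperreal.ofSeq g - (a : Hyperreal)| < (r : Hyperreal) :=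
      h4.trans (by exact_mod_cast hkr)
    exact abs_lt.1 h5
  · -- bounded
    by_contra hub
    rw [isBounded_iff_forall_norm_le] at hub
    push_neg at hub
    have hstep : ∀ k : ℕ, ∃ f : ℕ → ℝ, ∀ᶠ n in (hyperfilter ℕ : Filter ℕ),
        f n ∈ Y n ∧ (k:ℝ) < |f n| := by
      intro k
      obtain ⟨a, ha, hak⟩ := hub (k+1)
      obtain ⟨y, ⟨f, rfl, hfY⟩, hinf⟩ := ha
      rw [Real.norm_eq_abs] at hak
      have h1 : |Hyperreal.ofSeq f - (a : Hyperreal)| < (1 : Hyperreal) := by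
        have := abs_lt_of_infinitesimal hinf one_pos
        simpa using this
      have h2 : ((k:ℝ) : Hyperreal) < |Hyperreal.ofSeq f| := by
        have htri : |(a : Hyperreal)| ≤ |Hyperreal.ofSeq f - (a : Hyperreal)| + |Hyperreal.ofSeq f| := calc
          |(a : Hyperreal)| = |((a : Hyperreal) - Hyperreal.ofSeq f) + Hyperreal.ofSeq f| := by
            ring_nf
          _ ≤ |(a : Hyperreal) - Hyperreal.ofSeq f| + |Hyperreal.ofSeq f| := abs_add_le _ _
          _ = |Hyperreal.ofSeq f - (a : Hyperreal)| + |Hyperreal.ofSeq f| := by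
            rw [abs_sub_comm]
        have hA : (((k:ℝ)+1 : ℝ) : Hyperreal) < |(a : Hyperreal)| := by
          have : (((k:ℝ)+1 : ℝ) : Hyperreal) < ((|a| : ℝ) : Hyperreal) := by exact_mod_cast hak
          simpa [Hyperreal.coe_abs] using this
        have : (((k:ℝ)+1 : ℝ) : Hyperreal) < 1 + |Hyperreal.ofSeq f| :=
          hA.trans_le (htri.trans (add_le_add_left h1.le _))
        have hc : (((k:ℝ)+1 : ℝ) : Hyperreal) = ((k:ℝ) : Hyperreal) + 1 := by push_cast; ring
        linarith [this, hc ▸ this]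
      rw [coe_lt_abs_ofSeq] at h2
      exact ⟨f, hfY.and h2⟩
    obtain ⟨g, hg1, hg2⟩ := diagonal_lemma Y (fun k x => (k:ℝ) < |x|)
      (fun k j x hkj hx => lt_of_le_of_lt (by exact_mod_cast hkj) hx) hstep
    obtain ⟨r, hr⟩ := hfin (Hyperreal.ofSeq g) ⟨g, rfl, hg1⟩
    obtain ⟨k, hk⟩ := exists_nat_gt r
    have h6 : ((k:ℝ) : Hyperreal) < |Hyperreal.ofSeq g| := (coe_lt_abs_ofSeq g k).2 (hg2 k)
    have h7 : (r : Hyperreal) < ((k:ℝ) : Hyperreal) := by exact_mod_cast hk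
    exact absurd (h6.trans hr) (not_lt.2 h7.le)
end
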